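/- Let H = ℂ((X)) be the field of formal Laurent series with its X-adic (valuation) topology, and let π₊ : H → H and π₋ : H → H be the ℂ-linear projections onto the nonnegative-power part ℂ[[X]] and the negative-power part X^{−1}ℂ[X^{−1}], respectively. For continuous ℂ-linear endomorphisms F, G of H, define η(F,G) := Σ_{k<0} [ (coefficient of X^k in (π₋ ∘ F ∘ π₊ ∘ G)(X^k)) − (coefficient of X^k in (π₋ ∘ G ∘ π₊ ∘ F)(X^k)) ]. Then: (a) for all continuous F, G the displayed family over k < 0 is finitely supported, so η(F,G) is a well-defined complex number; and (b) η is a 2-cocycle on the Lie algebra of continuous ℂ-linear endomorphisms of H: η(F,G) = −η(G,F) and η([F,G], E) + η([G,E], F) + η([E,F], G) = 0 for all continuous F, G, E, where [F,G] = F ∘ G − G ∘ F. Consequently the bracket [F,G]~ := [F,G] + η(F,G)·C defines a Lie algebra structure on 𝔤𝔩 ⊕ ℂC (the central extension of the semi-infinite general linear algebra). -/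

import Mathlib

/-- The field of formal Laurent series `H = ℂ((X))`, modeled as the space of functions
`ℤ → ℂ` whose support is bounded below (the coefficient functions of Laurent series). -/
noncomputable def LaurentSp : Submodule ℂ (ℤ → ℂ) where
  carrier := {f | ∃ N : ℤ, ∀ k < N, f k = 0}
  zero_mem' := ⟨0, fun _ _ => rfl⟩
  add_mem' := by
    rintro f g ⟨N₁, h₁⟩ ⟨N₂, h₂⟩
    exact ⟨min N₁ N₂, fun k hk => by
      simp [h₁ k (lt_of_lt_of_le hk (min_le_left _ _)),
        h₂ k (lt_of_lt_of_le hk (min_le_right _ _))]⟩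
  smul_mem' := by
    rintro c f ⟨N, h⟩
    exact ⟨N, fun k hk => by simp [h k hk]⟩

/-- The monomial `X^k ∈ ℂ((X))`. -/
noncomputable def lX (k : ℤ) : LaurentSp :=
  ⟨fun i => if i = k then 1 else 0, ⟨k, fun i hi => if_neg (ne_of_lt hi)⟩⟩

/-- The coefficientwise projection onto nonnegative powers, on the ambient space. -/
noncomputable def ambPiPlus : (ℤ → ℂ) →ₗ[ℂ] (ℤ → ℂ) where
  toFun f := fun k => if 0 ≤ k then f k else 0
  map_add' f g := by funext k; by_cases h : 0 ≤ k <;> simp [h]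
  map_smul' c f := by funext k; by_cases h : 0 ≤ k <;> simp [h]

/-- The coefficientwise projection onto negative powers, on the ambient space. -/
noncomputable def ambPiMinus : (ℤ → ℂ) →ₗ[ℂ] (ℤ → ℂ) where
  toFun f := fun k => if k < 0 then f k else 0
  map_add' f g := by funext k; by_cases h : k < 0 <;> simp [h]
  map_smul' c f := by funext k; by_cases h : k < 0 <;> simp [h]

/-- The projection `π₊ : H → H` onto the nonnegative-power part `ℂ[[X]]`. -/
noncomputable def lPiPlus : LaurentSp →ₗ[ℂ] LaurentSp :=
  ambPiPlus.restrict (p := LaurentSp) (q := LaurentSp) (by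
    rintro f ⟨N, hN⟩
    refine ⟨N, fun k hk => ?_⟩
    by_cases h : 0 ≤ k <;> simp [ambPiPlus, h, hN k hk])

/-- The projection `π₋ : H → H` onto the negative-power part `X⁻¹ℂ[X⁻¹]`. -/
noncomputable def lPiMinus : LaurentSp →ₗ[ℂ] LaurentSp :=
  ambPiMinus.restrict (p := LaurentSp) (q := LaurentSp) (by
    rintro f ⟨N, hN⟩
    refine ⟨N, fun k hk => ?_⟩
    by_cases h : k < 0 <;> simp [ambPiMinus, h, hN k hk])

/-- A `ℂ`-linear endomorphism of `H = ℂ((X))` is continuous for the `X`-adic (valuation)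
topology iff it is continuous at `0`, i.e. for every basic neighborhood `X^N ℂ[[X]]` of `0`
there is a basic neighborhood `X^M ℂ[[X]]` mapped into it. -/
def XadicContinuous (F : LaurentSp →ₗ[ℂ] LaurentSp) : Prop :=
  ∀ N : ℤ, ∃ M : ℤ, ∀ f : LaurentSp,
    (∀ k < M, (f : ℤ → ℂ) k = 0) → ∀ k < N, ((F f : LaurentSp) : ℤ → ℂ) k = 0

/-- The `k`-th summand (for `k < 0`) of the Japanese cocycle
`η(F,G) = tr(F^{−+}G^{+−} − G^{−+}F^{+−})`: the coefficient of `X^k` in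
`(π₋ ∘ F ∘ π₊ ∘ G)(X^k) − (π₋ ∘ G ∘ π₊ ∘ F)(X^k)`. -/
noncomputable def japSummand (F G : LaurentSp →ₗ[ℂ] LaurentSp) (k : ℤ) : ℂ :=
  if k < 0 then
    (((lPiMinus ∘ₗ F ∘ₗ lPiPlus ∘ₗ G) (lX k) : LaurentSp) : ℤ → ℂ) k -
      (((lPiMinus ∘ₗ G ∘ₗ lPiPlus ∘ₗ F) (lX k) : LaurentSp) : ℤ → ℂ) k
  else 0

/-- The Japanese cocycle `η(F,G)`. -/
noncomputable def jap (F G : LaurentSp →ₗ[ℂ] LaurentSp) : ℂ :=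
  ∑ᶠ k : ℤ, japSummand F G k

/-- The bracket `[(F,a),(G,b)]~ = ([F,G], η(F,G))` on `𝔤𝔩 ⊕ ℂC`, defining the central
extension of the semi-infinite general linear algebra. -/
noncomputable def glTildeBracket (p q : (LaurentSp →ₗ[ℂ] LaurentSp) × ℂ) :
    (LaurentSp →ₗ[ℂ] LaurentSp) × ℂ :=
  (p.1 ∘ₗ q.1 - q.1 ∘ₗ p.1, jap p.1 q.1)

/-!
Let `f = opMatrix F` be the matrix of `F` in the monomial basis. Continuity makes its `(−,+)`
block `f⁻⁺` finitely supported, so `η(F,G) = tr(f⁻⁺g⁺⁻) − tr(g⁻⁺f⁺⁻)` is a difference of two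
finite sums. For products, splitting the middle index by sign and using the cyclic invariance
of finite block traces gives `tr((ab)⁻⁺c⁺⁻) − tr(a⁻⁺(bc)⁺⁻) = tr(a⁻⁻b⁻⁺c⁺⁻) − tr(c⁻⁻a⁻⁺b⁺⁻)`.
The Jacobi sum of `η` is the alternating sum of this difference over the six orderings of
`F, G, E`, and the right-hand sides cancel within each cyclic class.
-/

open Function Set

lemma Function.HasFiniteSupport.finsum_snd {α β M : Type*} [AddCommMonoid M] {f : α × β → M}
    (hf : HasFiniteSupport f) : HasFiniteSupport fun a => ∑ᶠ b, f (a, b) := by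
  refine (hf.image Prod.fst).subset fun a ha => ?_
  by_contra h
  refine ha (finsum_eq_zero_of_forall_eq_zero fun b => ?_)
  by_contra hb
  exact h ⟨(a, b), hb, rfl⟩

structure IsContinuousMatrix (a : ℤ → ℤ → ℂ) : Prop where
  col_eventually_zero : ∀ j, ∃ N, ∀ i < N, a i j = 0
  row_eventually_zero : ∀ R, ∃ M, ∀ i < R, ∀ j, M ≤ j → a i j = 0

noncomputable def matMul (a b : ℤ → ℤ → ℂ) (i j : ℤ) : ℂ := ∑ᶠ m, a i m * b m j

/-- The summand of `tr (a⁻⁺ b⁺⁻)`. -/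
noncomputable def offDiagTerm (a b : ℤ → ℤ → ℂ) : ℤ × ℤ → ℂ :=
  (Iio 0 ×ˢ Ici 0).indicator fun p => a p.1 p.2 * b p.2 p.1

noncomputable def offDiagTrace (a b : ℤ → ℤ → ℂ) : ℂ := ∑ᶠ k, ∑ᶠ j, offDiagTerm a b (k, j)

/-- The summand of `tr (a^{s₁s₂} b^{s₂s₃} c^{s₃s₁})`. -/
noncomputable def tripleTerm (s₁ s₂ s₃ : Set ℤ) (a b c : ℤ → ℤ → ℂ) : ℤ × ℤ × ℤ → ℂ :=
  (s₁ ×ˢ s₂ ×ˢ s₃).indicator fun q => a q.1 q.2.1 * b q.2.1 q.2.2 * c q.2.2 q.1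

noncomputable def tripleTrace (s₁ s₂ s₃ : Set ℤ) (a b c : ℤ → ℤ → ℂ) : ℂ :=
  ∑ᶠ q, tripleTerm s₁ s₂ s₃ a b c q

namespace IsContinuousMatrix

variable {a a' b c : ℤ → ℤ → ℂ} {s₁ s₂ s₃ : Set ℤ}

lemma exists_col_bound (ha : IsContinuousMatrix a) (s : Finset ℤ) :
    ∃ N, ∀ j ∈ s, ∀ i < N, a i j = 0 := by
  choose N hN using ha.col_eventually_zero
  obtain ⟨N₀, hN₀⟩ := (s.image N).bddBelow
  exact ⟨N₀, fun j hj i hi => hN j i (hi.trans_le (hN₀ (Finset.mem_image_of_mem N hj)))⟩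

lemma exists_negPos_bound (ha : IsContinuousMatrix a) :
    ∃ N M, ∀ k j, k < 0 → 0 ≤ j → a k j ≠ 0 → N ≤ k ∧ j < M := by
  obtain ⟨M, hM⟩ := ha.row_eventually_zero 0
  obtain ⟨N, hN⟩ := ha.exists_col_bound (Finset.Ico 0 M)
  refine ⟨N, M, fun k j hk hj hne => ?_⟩
  have hjM : j < M := not_le.1 fun h => hne (hM k hk j h)
  exact ⟨not_lt.1 fun h => hne (hN j (by simp [hj, hjM]) k h), hjM⟩

lemma sub (ha : IsContinuousMatrix a) (ha' : IsContinuousMatrix a') :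
    IsContinuousMatrix (a - a') where
  col_eventually_zero j := by
    obtain ⟨N₁, h₁⟩ := ha.col_eventually_zero j
    obtain ⟨N₂, h₂⟩ := ha'.col_eventually_zero j
    exact ⟨min N₁ N₂, fun i hi => by
      simp [h₁ i (hi.trans_le (min_le_left _ _)), h₂ i (hi.trans_le (min_le_right _ _))]⟩
  row_eventually_zero R := by
    obtain ⟨M₁, h₁⟩ := ha.row_eventually_zero R
    obtain ⟨M₂, h₂⟩ := ha'.row_eventually_zero R
    exact ⟨max M₁ M₂, fun i hi j hj => by
      simp [h₁ i hi j ((le_max_left _ _).trans hj), h₂ i hi j ((le_max_right _ _).trans hj)]⟩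

lemma hasFiniteSupport_offDiagTerm (ha : IsContinuousMatrix a) :
    HasFiniteSupport (offDiagTerm a b) := by
  obtain ⟨N, M, hNM⟩ := ha.exists_negPos_bound
  refine (Finset.Ico N 0 ×ˢ Finset.Ico 0 M).finite_toSet.subset fun p hp => ?_
  simp only [mem_support, offDiagTerm, indicator_apply_ne_zero, mem_inter_iff, mem_prod, mem_Iio,
    mem_Ici] at hp
  obtain ⟨⟨hk, hj⟩, hne⟩ := hp
  have := hNM p.1 p.2 hk hj (left_ne_zero_of_mul hne)
  simp only [Finset.coe_product, Finset.coe_Ico, mem_prod, mem_Ico]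
  omega

lemma hasFiniteSupport_tripleTerm (ha : IsContinuousMatrix a) (hb : IsContinuousMatrix b)
    (hc : IsContinuousMatrix c) (h₁ : s₁ ⊆ Iio 0) (h₂ : s₂ ⊆ Ici 0) :
    HasFiniteSupport (tripleTerm s₁ s₂ s₃ a b c) := by
  obtain ⟨N₁, M₁, hNM⟩ := ha.exists_negPos_bound
  obtain ⟨M₂, hM₂⟩ := hb.row_eventually_zero M₁
  obtain ⟨N₂, hN₂⟩ := hc.exists_col_bound (Finset.Ico N₁ 0)
  refine (Finset.Ico N₁ 0 ×ˢ Finset.Ico 0 M₁ ×ˢ Finset.Ico N₂ M₂).finite_toSet.subset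
    fun ⟨k, m, j⟩ hq => ?_
  simp only [mem_support, tripleTerm, indicator_apply_ne_zero, mem_inter_iff, mem_prod] at hq
  obtain ⟨⟨hk, hm, -⟩, hne⟩ := hq
  obtain ⟨⟨ha0, hb0⟩, hc0⟩ := mul_ne_zero_iff.1 hne |>.imp_left mul_ne_zero_iff.1
  have hk : k < 0 := h₁ hk
  have hm : 0 ≤ m := h₂ hm
  obtain ⟨hNk, hmM⟩ := hNM k m hk hm ha0
  have hjM : j < M₂ := not_le.1 fun h => hb0 (hM₂ m hmM j h)
  have hjN : N₂ ≤ j := not_lt.1 fun h => hc0 (hN₂ k (by simp [hNk, hk]) j h)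
  simp only [Finset.coe_product, Finset.coe_Ico, mem_prod, mem_Ico]
  omega

end IsContinuousMatrix

section Traces

variable {a a' b b' c : ℤ → ℤ → ℂ} {s₁ s₂ s₃ : Set ℤ}

lemma offDiagTrace_eq_finsum (ha : IsContinuousMatrix a) :
    offDiagTrace a b = ∑ᶠ p, offDiagTerm a b p :=
  (finsum_curry _ ha.hasFiniteSupport_offDiagTerm).symm

lemma offDiagTrace_sub_left (ha : IsContinuousMatrix a) (ha' : IsContinuousMatrix a') :
    offDiagTrace (a - a') b = offDiagTrace a b - offDiagTrace a' b := by
  rw [offDiagTrace_eq_finsum (ha.sub ha'), offDiagTrace_eq_finsum ha, offDiagTrace_eq_finsum ha',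
    ← finsum_sub_distrib ha.hasFiniteSupport_offDiagTerm ha'.hasFiniteSupport_offDiagTerm]
  refine finsum_congr fun p => ?_
  simp only [offDiagTerm, indicator_apply, Pi.sub_apply]
  split_ifs <;> ring

lemma offDiagTrace_sub_right (ha : IsContinuousMatrix a) :
    offDiagTrace a (b - b') = offDiagTrace a b - offDiagTrace a b' := by
  rw [offDiagTrace_eq_finsum ha, offDiagTrace_eq_finsum ha, offDiagTrace_eq_finsum ha,
    ← finsum_sub_distrib ha.hasFiniteSupport_offDiagTerm ha.hasFiniteSupport_offDiagTerm]
  refine finsum_congr fun p => ?_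
  simp only [offDiagTerm, indicator_apply, Pi.sub_apply]
  split_ifs <;> ring

lemma tripleTerm_rotate :
    tripleTerm s₁ s₂ s₃ a b c =
      tripleTerm s₂ s₃ s₁ b c a ∘ (Equiv.prodComm ℤ (ℤ × ℤ)).trans (Equiv.prodAssoc ℤ ℤ ℤ) := by
  classical
  funext ⟨k, m, j⟩
  change _ = tripleTerm s₂ s₃ s₁ b c a (m, j, k)
  simp only [tripleTerm, indicator_apply, mem_prod]
  by_cases h : k ∈ s₁ ∧ m ∈ s₂ ∧ j ∈ s₃
  · rw [if_pos h, if_pos ⟨h.2.1, h.2.2, h.1⟩]; ring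
  · rw [if_neg h, if_neg fun h' => h ⟨h'.2.2, h'.1, h'.2.1⟩]

lemma tripleTrace_rotate : tripleTrace s₁ s₂ s₃ a b c = tripleTrace s₂ s₃ s₁ b c a := by
  rw [tripleTrace, tripleTerm_rotate]
  exact finsum_comp_equiv _

lemma Function.HasFiniteSupport.tripleTerm_of_rotate
    (h : HasFiniteSupport (tripleTerm s₂ s₃ s₁ b c a)) :
    HasFiniteSupport (tripleTerm s₁ s₂ s₃ a b c) := by
  rw [tripleTerm_rotate]
  exact h.comp_of_injective (Equiv.injective _)

lemma tripleTerm_univ_mid :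
    tripleTerm s₁ univ s₃ a b c =
      tripleTerm s₁ (Iio 0) s₃ a b c + tripleTerm s₁ (Ici 0) s₃ a b c := by
  classical
  funext q
  simp only [tripleTerm, indicator_apply, mem_prod, mem_univ, mem_Iio, mem_Ici, Pi.add_apply]
  by_cases h : q.2.1 < 0
  · simp [h]
  · simp [h, not_lt.1 h]

lemma tripleTrace_univ_mid (hneg : HasFiniteSupport (tripleTerm s₁ (Iio 0) s₃ a b c))
    (hpos : HasFiniteSupport (tripleTerm s₁ (Ici 0) s₃ a b c)) :
    tripleTrace s₁ univ s₃ a b c =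
      tripleTrace s₁ (Iio 0) s₃ a b c + tripleTrace s₁ (Ici 0) s₃ a b c := by
  rw [tripleTrace, tripleTerm_univ_mid]
  exact finsum_add_distrib hneg hpos

lemma offDiagTrace_matMul_left (h : HasFiniteSupport (tripleTerm (Iio 0) univ (Ici 0) a b c)) :
    offDiagTrace (matMul a b) c = tripleTrace (Iio 0) univ (Ici 0) a b c := by
  let e := Equiv.prodCongr (Equiv.refl ℤ) (Equiv.prodComm ℤ ℤ)
  rw [tripleTrace, ← finsum_comp_equiv e, finsum_curry₃ (fun q => tripleTerm _ _ _ a b c (e q))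
    (h.comp_of_injective e.injective)]
  refine finsum_congr fun k => finsum_congr fun j => ?_
  by_cases hkj : k < 0 ∧ 0 ≤ j
  · rw [offDiagTerm, indicator_of_mem (by simpa using hkj), matMul, finsum_mul]
    refine finsum_congr fun m => ?_
    change _ = tripleTerm _ _ _ a b c (k, m, j)
    rw [tripleTerm, indicator_of_mem (by simpa using hkj)]
  · rw [offDiagTerm, indicator_of_notMem (by simpa using hkj)]
    refine (finsum_eq_zero_of_forall_eq_zero fun m => ?_).symm
    change tripleTerm _ _ _ a b c (k, m, j) = 0
    rw [tripleTerm, indicator_of_notMem (by simpa using hkj)]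

lemma offDiagTrace_matMul_right (h : HasFiniteSupport (tripleTerm (Iio 0) (Ici 0) univ a b c)) :
    offDiagTrace a (matMul b c) = tripleTrace (Iio 0) (Ici 0) univ a b c := by
  rw [tripleTrace, finsum_curry₃ _ h]
  refine finsum_congr fun k => finsum_congr fun j => ?_
  by_cases hkj : k < 0 ∧ 0 ≤ j
  · rw [offDiagTerm, indicator_of_mem (by simpa using hkj), matMul, mul_finsum]
    refine finsum_congr fun m => ?_
    rw [tripleTerm, indicator_of_mem (by simpa using hkj), mul_assoc]
  · rw [offDiagTerm, indicator_of_notMem (by simpa using hkj)]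
    refine (finsum_eq_zero_of_forall_eq_zero fun m => ?_).symm
    rw [tripleTerm, indicator_of_notMem (by simpa using hkj)]

lemma offDiagTrace_matMul_sub (ha : IsContinuousMatrix a) (hb : IsContinuousMatrix b)
    (hc : IsContinuousMatrix c) :
    offDiagTrace (matMul a b) c - offDiagTrace a (matMul b c) =
      tripleTrace (Iio 0) (Iio 0) (Ici 0) a b c - tripleTrace (Iio 0) (Iio 0) (Ici 0) c a b := by
  have hnpn := ha.hasFiniteSupport_tripleTerm hb hc subset_rfl subset_rfl (s₃ := Iio 0)
  have hnpp := ha.hasFiniteSupport_tripleTerm hb hc subset_rfl subset_rfl (s₃ := Ici 0)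
  have hnnp : HasFiniteSupport (tripleTerm (Iio 0) (Iio 0) (Ici 0) a b c) :=
    (hb.hasFiniteSupport_tripleTerm hc ha subset_rfl subset_rfl).tripleTerm_of_rotate
  have hpnn : HasFiniteSupport (tripleTerm (Ici 0) (Iio 0) (Iio 0) b c a) :=
    hnpn.tripleTerm_of_rotate.tripleTerm_of_rotate
  have hppn : HasFiniteSupport (tripleTerm (Ici 0) (Ici 0) (Iio 0) b c a) :=
    hnpp.tripleTerm_of_rotate.tripleTerm_of_rotate
  have hleft : HasFiniteSupport (tripleTerm (Iio 0) univ (Ici 0) a b c) := by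
    rw [tripleTerm_univ_mid]
    exact hnnp.add hnpp
  rw [offDiagTrace_matMul_left hleft,
    offDiagTrace_matMul_right (ha.hasFiniteSupport_tripleTerm hb hc subset_rfl subset_rfl),
    tripleTrace_univ_mid hnnp hnpp, tripleTrace_rotate (s₁ := Iio 0) (s₂ := Ici 0) (s₃ := univ),
    tripleTrace_univ_mid hpnn hppn]
  have hcab : tripleTrace (Iio 0) (Iio 0) (Ici 0) c a b =
      tripleTrace (Ici 0) (Iio 0) (Iio 0) b c a := by
    rw [tripleTrace_rotate, tripleTrace_rotate]
  have habc : tripleTrace (Iio 0) (Ici 0) (Ici 0) a b c =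
      tripleTrace (Ici 0) (Ici 0) (Iio 0) b c a :=
    tripleTrace_rotate
  linear_combination hcab + habc

end Traces

noncomputable def opMatrix (F : LaurentSp →ₗ[ℂ] LaurentSp) (i j : ℤ) : ℂ := (F (lX j) : ℤ → ℂ) i

lemma opMatrix_sub (F G : LaurentSp →ₗ[ℂ] LaurentSp) :
    opMatrix (F - G) = opMatrix F - opMatrix G := rfl

namespace XadicContinuous

variable {F G : LaurentSp →ₗ[ℂ] LaurentSp}

lemma comp (hF : XadicContinuous F) (hG : XadicContinuous G) : XadicContinuous (F ∘ₗ G) :=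
  fun N => by
    obtain ⟨M₁, h₁⟩ := hF N
    obtain ⟨M₂, h₂⟩ := hG M₁
    exact ⟨M₂, fun f hf => h₁ (G f) (h₂ f hf)⟩

lemma sub (hF : XadicContinuous F) (hG : XadicContinuous G) : XadicContinuous (F - G) :=
  fun N => by
    obtain ⟨M₁, h₁⟩ := hF N
    obtain ⟨M₂, h₂⟩ := hG N
    refine ⟨max M₁ M₂, fun f hf k hk => ?_⟩
    simp [h₁ f (fun j hj => hf j (hj.trans_le (le_max_left _ _))) k hk,
      h₂ f (fun j hj => hf j (hj.trans_le (le_max_right _ _))) k hk]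

lemma isContinuousMatrix (hF : XadicContinuous F) : IsContinuousMatrix (opMatrix F) where
  col_eventually_zero j := (F (lX j)).2
  row_eventually_zero R := by
    obtain ⟨M, hM⟩ := hF R
    exact ⟨M, fun i hi j hj => hM (lX j) (fun k hk => if_neg (by omega)) i hi⟩

/- `f` minus its truncation to degrees in `[L, M)` vanishes below `M`, so its image under `F`
vanishes in degree `i`. -/
lemma apply_eq_finsum (hF : XadicContinuous F) (f : LaurentSp) (i : ℤ) :
    (F f : ℤ → ℂ) i = ∑ᶠ m, (f : ℤ → ℂ) m * opMatrix F i m := by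
  obtain ⟨M, hM⟩ := hF (i + 1)
  obtain ⟨L, hL⟩ := f.2
  set g : LaurentSp := ∑ m ∈ Finset.Ico L M, (f : ℤ → ℂ) m • lX m
  have hg : ∀ n, (g : ℤ → ℂ) n = if n ∈ Finset.Ico L M then (f : ℤ → ℂ) n else 0 := by
    intro n
    simp [g, Finset.sum_apply, lX]
  have htail : (F (f - g) : ℤ → ℂ) i = 0 := by
    refine hM (f - g) (fun n hn => ?_) i (by omega)
    rw [Submodule.coe_sub, Pi.sub_apply, hg]
    split_ifs with h
    · ring
    · rw [hL n (by simp only [Finset.mem_Ico, not_and, not_lt] at h; omega), sub_zero]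
  have hhead : (F g : ℤ → ℂ) i = ∑ m ∈ Finset.Ico L M, (f : ℤ → ℂ) m * opMatrix F i m := by
    simp [g, Finset.sum_apply, opMatrix]
  have hsupp : support (fun m => (f : ℤ → ℂ) m * opMatrix F i m) ⊆ Finset.Ico L M := by
    intro m hm
    obtain ⟨hf, hF'⟩ := mul_ne_zero_iff.1 hm
    simp only [Finset.coe_Ico, mem_Ico]
    exact ⟨not_lt.1 fun h => hf (hL m h),
      not_le.1 fun h => hF' (hM (lX m) (fun n hn => if_neg (by omega)) i (by omega))⟩
  calc (F f : ℤ → ℂ) i = (F (f - g) : ℤ → ℂ) i + (F g : ℤ → ℂ) i := by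
        rw [← Pi.add_apply, ← Submodule.coe_add, ← map_add, sub_add_cancel]
    _ = ∑ᶠ m, (f : ℤ → ℂ) m * opMatrix F i m := by
        rw [htail, hhead, zero_add, finsum_eq_sum_of_support_subset _ hsupp]

end XadicContinuous

section Cocycle

variable {F G E : LaurentSp →ₗ[ℂ] LaurentSp}

lemma opMatrix_comp (hF : XadicContinuous F) :
    opMatrix (F ∘ₗ G) = matMul (opMatrix F) (opMatrix G) := by
  funext i j
  rw [opMatrix, LinearMap.comp_apply, hF.apply_eq_finsum, matMul]
  exact finsum_congr fun m => mul_comm _ _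

lemma japSummand_eq (hF : XadicContinuous F) (hG : XadicContinuous G) (k : ℤ) :
    japSummand F G k = ∑ᶠ j, offDiagTerm (opMatrix F) (opMatrix G) (k, j) -
      ∑ᶠ j, offDiagTerm (opMatrix G) (opMatrix F) (k, j) := by
  by_cases hk : k < 0
  · have key : ∀ {A B : LaurentSp →ₗ[ℂ] LaurentSp}, XadicContinuous A →
        ((lPiMinus ∘ₗ A ∘ₗ lPiPlus ∘ₗ B) (lX k) : ℤ → ℂ) k =
          ∑ᶠ j, offDiagTerm (opMatrix A) (opMatrix B) (k, j) := by
      intro A B hA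
      change (if k < 0 then (A (lPiPlus (B (lX k))) : ℤ → ℂ) k else 0) = _
      rw [if_pos hk, hA.apply_eq_finsum]
      refine finsum_congr fun j => ?_
      change (if 0 ≤ j then opMatrix B j k else 0) * opMatrix A k j = _
      by_cases hj : 0 ≤ j
      · rw [if_pos hj, offDiagTerm, indicator_of_mem (by simp [hk, hj]), mul_comm]
      · rw [if_neg hj, offDiagTerm, indicator_of_notMem (by simp [hj]), zero_mul]
    rw [japSummand, if_pos hk, key hF, key hG]
  · have hzero : ∀ a b j, offDiagTerm a b (k, j) = 0 := fun a b j =>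
      indicator_of_notMem (by simp [hk]) _
    simp [japSummand, hk, hzero]

lemma hasFiniteSupport_japSummand (hF : XadicContinuous F) (hG : XadicContinuous G) :
    HasFiniteSupport (japSummand F G) := by
  rw [funext (japSummand_eq hF hG)]
  exact hF.isContinuousMatrix.hasFiniteSupport_offDiagTerm.finsum_snd.sub
    hG.isContinuousMatrix.hasFiniteSupport_offDiagTerm.finsum_snd

lemma jap_eq_offDiagTrace_sub (hF : XadicContinuous F) (hG : XadicContinuous G) :
    jap F G =
      offDiagTrace (opMatrix F) (opMatrix G) - offDiagTrace (opMatrix G) (opMatrix F) := by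
  rw [jap, finsum_congr (japSummand_eq hF hG),
    finsum_sub_distrib hF.isContinuousMatrix.hasFiniteSupport_offDiagTerm.finsum_snd
      hG.isContinuousMatrix.hasFiniteSupport_offDiagTerm.finsum_snd]
  rfl

lemma jap_skew (F G : LaurentSp →ₗ[ℂ] LaurentSp) : -jap G F = jap F G := by
  rw [jap, jap, ← finsum_neg_distrib]
  refine finsum_congr fun k => ?_
  unfold japSummand
  split_ifs <;> simp

lemma jap_self (F : LaurentSp →ₗ[ℂ] LaurentSp) : jap F F = 0 := by
  linear_combination (-1 / 2 : ℂ) * jap_skew F F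

lemma jap_commutator (hF : XadicContinuous F) (hG : XadicContinuous G)
    (hE : XadicContinuous E) :
    jap (F ∘ₗ G - G ∘ₗ F) E =
      offDiagTrace (matMul (opMatrix F) (opMatrix G)) (opMatrix E) -
        offDiagTrace (matMul (opMatrix G) (opMatrix F)) (opMatrix E) -
        (offDiagTrace (opMatrix E) (matMul (opMatrix F) (opMatrix G)) -
          offDiagTrace (opMatrix E) (matMul (opMatrix G) (opMatrix F))) := by
  rw [jap_eq_offDiagTrace_sub ((hF.comp hG).sub (hG.comp hF)) hE, opMatrix_sub,
    offDiagTrace_sub_left (hF.comp hG).isContinuousMatrix (hG.comp hF).isContinuousMatrix,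
    offDiagTrace_sub_right hE.isContinuousMatrix, opMatrix_comp hF, opMatrix_comp hG]

lemma jap_jacobi (hF : XadicContinuous F) (hG : XadicContinuous G) (hE : XadicContinuous E) :
    jap (F ∘ₗ G - G ∘ₗ F) E + jap (G ∘ₗ E - E ∘ₗ G) F + jap (E ∘ₗ F - F ∘ₗ E) G = 0 := by
  have hf := hF.isContinuousMatrix
  have hg := hG.isContinuousMatrix
  have he := hE.isContinuousMatrix
  rw [jap_commutator hF hG hE, jap_commutator hG hE hF, jap_commutator hE hF hG]
  linear_combination offDiagTrace_matMul_sub hf hg he + offDiagTrace_matMul_sub hg he hf +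
    offDiagTrace_matMul_sub he hf hg - offDiagTrace_matMul_sub hg hf he -
    offDiagTrace_matMul_sub hf he hg - offDiagTrace_matMul_sub he hg hf

end Cocycle

/-- (a) For continuous `ℂ`-linear endomorphisms `F, G` of `H = ℂ((X))` the family of
diagonal entries defining `η(F,G)` is finitely supported, so `η(F,G)` is well defined;
(b) `η` is a 2-cocycle on the Lie algebra of continuous endomorphisms:
`η(F,G) = −η(G,F)` and `η([F,G],E) + η([G,E],F) + η([E,F],G) = 0`.
Consequently `[F,G]~ = [F,G] + η(F,G)·C` defines a Lie algebra structure on `𝔤𝔩 ⊕ ℂC`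
(the bracket is alternating and satisfies the Jacobi identity). -/
theorem japanese_cocycle :
    (∀ F G : LaurentSp →ₗ[ℂ] LaurentSp, XadicContinuous F → XadicContinuous G →
      (Function.support (japSummand F G)).Finite) ∧
    (∀ F G : LaurentSp →ₗ[ℂ] LaurentSp, XadicContinuous F → XadicContinuous G →
      jap F G = -jap G F) ∧
    (∀ F G E : LaurentSp →ₗ[ℂ] LaurentSp,
      XadicContinuous F → XadicContinuous G → XadicContinuous E →
      jap (F ∘ₗ G - G ∘ₗ F) E + jap (G ∘ₗ E - E ∘ₗ G) F + jap (E ∘ₗ F - F ∘ₗ E) G = 0) ∧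
    (∀ p : (LaurentSp →ₗ[ℂ] LaurentSp) × ℂ, glTildeBracket p p = 0) ∧
    (∀ p q r : (LaurentSp →ₗ[ℂ] LaurentSp) × ℂ,
      XadicContinuous p.1 → XadicContinuous q.1 → XadicContinuous r.1 →
      glTildeBracket (glTildeBracket p q) r + glTildeBracket (glTildeBracket q r) p +
        glTildeBracket (glTildeBracket r p) q = 0) := by
  refine ⟨fun F G hF hG => hasFiniteSupport_japSummand hF hG, fun F G _ _ => (jap_skew F G).symm,
    fun F G E hF hG hE => jap_jacobi hF hG hE, fun p => ?_, fun p q r hp hq hr => ?_⟩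
  · exact Prod.ext (sub_self (p.1 ∘ₗ p.1)) (jap_self p.1)
  · refine Prod.ext ?_ (jap_jacobi hp hq hr)
    simp only [glTildeBracket, Prod.fst_add, Prod.fst_zero, LinearMap.sub_comp, LinearMap.comp_sub,
      LinearMap.comp_assoc]
    abel
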